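/- arXiv:0707.1148 — 7 statements merged into one kernel-verified Lean document; each statement's English description precedes it below -/
import Mathlib

section
/- Local-global principle for graded modules: Let R be a ℤ-graded, graded-commutative ring and let M be a graded left R-module. Then the following are equivalent: (1) M = 0; (2) for every graded prime ideal 𝔭 of R and every x ∈ M there exists a homogeneous element s ∈ R with s ∉ 𝔭 and s • x = 0; (3) for every graded maximal ideal 𝔪 of R and every x ∈ M there exists a homogeneous element s ∈ R with s ∉ 𝔪 and s • x = 0. (Conditions (2) and (3) express exactly that the localization of M at the multiplicative set of homogeneous elements outside 𝔭, respectively outside 𝔪, vanishes.) -/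
/-- A ℤ-graded ring `R` (graded by `𝒜 : ℤ → AddSubgroup R`) is *graded-commutative* if
for all homogeneous `r ∈ 𝒜 i` and `s ∈ 𝒜 j` one has `r * s = s * r` when `i * j` is even
and `r * s = -(s * r)` when `i * j` is odd. -/
def IsGradedComm {R : Type*} [Ring R] (𝒜 : ℤ → AddSubgroup R) : Prop :=
  ∀ ⦃i j : ℤ⦄ ⦃r s : R⦄, r ∈ 𝒜 i → s ∈ 𝒜 j →
    (Even (i * j) → r * s = s * r) ∧ (¬ Even (i * j) → r * s = -(s * r))

/-!
If `x ≠ 0`, the homogeneous elements killing `x` span a proper homogeneous ideal, which by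
Zorn's lemma lies in a graded maximal ideal `𝔪`; then no homogeneous `s ∉ 𝔪` kills `x`.
This is (3) → (1). For (2) → (3), graded commutativity makes homogeneous ideals two-sided, and a
two-sided graded maximal ideal is prime: for homogeneous `a ∉ 𝔪` one has `𝔪 + R a = R`, and for
arbitrary `x y` with `x y ∈ 𝔪` one drops the components of `x` and `y` lying in `𝔪` and looks at
the top-degree component of the product.
-/

open DirectSum SetLike

section GradedMaximal

variable {ι σ R : Type*} [DecidableEq ι] [AddMonoid ι] [Semiring R] [SetLike σ R]
  [AddSubmonoidClass σ R] (𝒜 : ι → σ) [GradedRing 𝒜]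

def Ideal.IsGradedMaximal (𝔪 : Ideal R) : Prop :=
  𝔪.IsHomogeneous 𝒜 ∧ 𝔪 ≠ ⊤ ∧ ∀ J : Ideal R, J.IsHomogeneous 𝒜 → 𝔪 ≤ J → J ≠ ⊤ → J = 𝔪

variable {𝒜}

theorem Ideal.exists_le_isGradedMaximal {I : Ideal R} (hI : I.IsHomogeneous 𝒜)
    (hI_ne_top : I ≠ ⊤) : ∃ 𝔪 : Ideal R, 𝔪.IsGradedMaximal 𝒜 ∧ I ≤ 𝔪 := by
  obtain ⟨𝔪, hI𝔪, ⟨h𝔪, h𝔪_ne_top⟩, hmax⟩ :=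
    zorn_le_nonempty₀ {J : Ideal R | J.IsHomogeneous 𝒜 ∧ J ≠ ⊤}
      (fun c hc hchain J hJ => ⟨sSup c,
        ⟨Ideal.IsHomogeneous.sSup fun K hK => (hc hK).1,
          (CompleteLattice.IsCompactElement.directed_sSup_lt_of_lt Ideal.isCompactElement_top
            ⟨J, hJ⟩ hchain.directedOn fun K hK => lt_top_iff_ne_top.2 (hc hK).2).ne⟩,
        fun _ => le_sSup⟩)
      I ⟨hI, hI_ne_top⟩
  exact ⟨𝔪, ⟨h𝔪, h𝔪_ne_top, fun J hJ h𝔪J hJ_ne_top => (hmax ⟨hJ, hJ_ne_top⟩ h𝔪J).antisymm h𝔪J⟩,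
    hI𝔪⟩

variable (𝒜)

theorem exists_isGradedMaximal_forall_smul_eq_zero {M : Type*} [AddCommMonoid M] [Module R M]
    {x : M} (hx : x ≠ 0) : ∃ 𝔪 : Ideal R, 𝔪.IsGradedMaximal 𝒜 ∧
      ∀ s : R, IsHomogeneousElem 𝒜 s → s • x = 0 → s ∈ 𝔪 := by
  let I := Ideal.span {s : R | IsHomogeneousElem 𝒜 s ∧ s • x = 0}
  have hI_le : I ≤ Ideal.torsionOf R M x :=
    Ideal.span_le.2 fun s hs => (Ideal.mem_torsionOf_iff x s).2 hs.2
  have hI_ne_top : I ≠ ⊤ := fun h => hx <| by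
    simpa using (Ideal.mem_torsionOf_iff x 1).1 (hI_le (h ▸ Submodule.mem_top))
  obtain ⟨𝔪, h𝔪, hI𝔪⟩ :=
    Ideal.exists_le_isGradedMaximal (Ideal.homogeneous_span 𝒜 _ fun s hs => hs.1) hI_ne_top
  exact ⟨𝔪, h𝔪, fun s hs hsx => hI𝔪 (Ideal.subset_span ⟨hs, hsx⟩)⟩

end GradedMaximal

theorem IsGradedComm.isTwoSided {R : Type*} [Ring R] {𝒜 : ℤ → AddSubgroup R} [GradedRing 𝒜]
    (hcomm : IsGradedComm 𝒜) {I : Ideal R} (hI : I.IsHomogeneous 𝒜) : I.IsTwoSided := by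
  classical
  have homogeneous_mul_mem {i j : ℤ} {a b : R} (ha : a ∈ 𝒜 i) (hb : b ∈ 𝒜 j) (haI : a ∈ I) :
      a * b ∈ I := by
    by_cases hij : Even (i * j)
    · rw [(hcomm ha hb).1 hij]; exact I.mul_mem_left b haI
    · rw [(hcomm ha hb).2 hij]; exact I.neg_mem (I.mul_mem_left b haI)
  refine ⟨fun {a} b ha => ?_⟩
  rw [← sum_support_decompose 𝒜 a, ← sum_support_decompose 𝒜 b, Finset.sum_mul_sum]
  exact I.sum_mem fun i _ => I.sum_mem fun j _ =>
    homogeneous_mul_mem (coe_mem _) (coe_mem _) (hI i ha)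

theorem exists_finset_sub_sum_decompose_mem {ι σ R : Type*} [DecidableEq ι] [AddMonoid ι]
    [Ring R] [SetLike σ R] [AddSubmonoidClass σ R] (𝒜 : ι → σ) [GradedRing 𝒜]
    (I : Ideal R) (x : R) :
    ∃ s : Finset ι, x - ∑ i ∈ s, (decompose 𝒜 x i : R) ∈ I ∧
      ∀ i ∈ s, (decompose 𝒜 x i : R) ∉ I := by
  classical
  have hx := sum_support_decompose 𝒜 x
  rw [← Finset.sum_filter_add_sum_filter_not _ fun i => (decompose 𝒜 x i : R) ∉ I] at hx
  refine ⟨{i ∈ (decompose 𝒜 x).support | (decompose 𝒜 x i : R) ∉ I}, ?_,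
    fun i hi => (Finset.mem_filter.1 hi).2⟩
  rw [sub_eq_iff_eq_add'.2 hx.symm]
  exact Ideal.sum_mem _ fun i hi => not_not.1 (Finset.mem_filter.1 hi).2

section Prime

variable {ι σ R : Type*} [DecidableEq ι] [AddCommMonoid ι] [LinearOrder ι]
  [IsOrderedCancelAddMonoid ι] [Ring R] [SetLike σ R] [AddSubmonoidClass σ R]
  {𝒜 : ι → σ} [GradedRing 𝒜]

theorem GradedRing.proj_add_sum_mul_sum {u v : ι → R} (hu : ∀ i, u i ∈ 𝒜 i)
    (hv : ∀ j, v j ∈ 𝒜 j) {s t : Finset ι} {a b : ι} (ha : a ∈ s) (hb : b ∈ t)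
    (hs : ∀ i ∈ s, i ≤ a) (ht : ∀ j ∈ t, j ≤ b) :
    GradedRing.proj 𝒜 (a + b) ((∑ i ∈ s, u i) * ∑ j ∈ t, v j) = u a * v b := by
  have proj_mul (i j : ι) (hij : i + j < a + b) :
      GradedRing.proj 𝒜 (a + b) (u i * v j) = 0 := by
    rw [GradedRing.proj_apply, decompose_of_mem_ne 𝒜 (GradedMul.mul_mem (hu i) (hv j)) hij.ne]
  simp only [Finset.sum_mul_sum, map_sum]
  rw [Finset.sum_eq_single_of_mem a ha, Finset.sum_eq_single_of_mem b hb, GradedRing.proj_apply,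
    decompose_of_mem_same 𝒜 (GradedMul.mul_mem (hu a) (hv b))]
  · exact fun j hj hjb => proj_mul a j (add_lt_add_of_le_of_lt le_rfl ((ht j hj).lt_of_ne hjb))
  · exact fun i hi hia => Finset.sum_eq_zero fun j hj =>
      proj_mul i j (add_lt_add_of_lt_of_le ((hs i hi).lt_of_ne hia) (ht j hj))

-- `Ideal.IsHomogeneous.isPrime_of_homogeneous_mem_or_mem` is stated for commutative rings only.
theorem Ideal.IsHomogeneous.isPrime_of_isTwoSided {I : Ideal R} [I.IsTwoSided]
    (hI : I.IsHomogeneous 𝒜) (hI_ne_top : I ≠ ⊤)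
    (homogeneous_mem_or_mem : ∀ {x y : R}, IsHomogeneousElem 𝒜 x → IsHomogeneousElem 𝒜 y →
      x * y ∈ I → x ∈ I ∨ y ∈ I) : I.IsPrime := by
  refine ⟨hI_ne_top, fun {x y} hxy => ?_⟩
  by_contra! ⟨hx, hy⟩
  obtain ⟨s, hxs, hs⟩ := exists_finset_sub_sum_decompose_mem 𝒜 I x
  obtain ⟨t, hyt, ht⟩ := exists_finset_sub_sum_decompose_mem 𝒜 I y
  have hs_ne : s.Nonempty := Finset.nonempty_iff_ne_empty.2 fun h => hx (by simpa [h] using hxs)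
  have ht_ne : t.Nonempty := Finset.nonempty_iff_ne_empty.2 fun h => hy (by simpa [h] using hyt)
  set x' := ∑ i ∈ s, (decompose 𝒜 x i : R)
  set y' := ∑ j ∈ t, (decompose 𝒜 y j : R)
  have hx'y' : x' * y' ∈ I := by
    have : x' * y' = x * y - (x - x') * y - x' * (y - y') := by noncomm_ring
    rw [this]
    exact I.sub_mem (I.sub_mem hxy (I.mul_mem_right y hxs)) (I.mul_mem_left x' hyt)
  have htop := hI (s.max' hs_ne + t.max' ht_ne) hx'y'
  rw [← GradedRing.proj_apply, GradedRing.proj_add_sum_mul_sum (fun i => coe_mem _)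
    (fun j => coe_mem _) (s.max'_mem hs_ne) (t.max'_mem ht_ne) s.le_max' t.le_max'] at htop
  rcases homogeneous_mem_or_mem ⟨_, coe_mem _⟩ ⟨_, coe_mem _⟩ htop with h | h
  · exact hs _ (s.max'_mem hs_ne) h
  · exact ht _ (t.max'_mem ht_ne) h

theorem Ideal.IsGradedMaximal.isPrime {𝔪 : Ideal R} [𝔪.IsTwoSided]
    (h𝔪 : 𝔪.IsGradedMaximal 𝒜) : 𝔪.IsPrime := by
  obtain ⟨h𝔪_hom, h𝔪_ne_top, hmax⟩ := h𝔪
  refine h𝔪_hom.isPrime_of_isTwoSided h𝔪_ne_top fun {a b} ⟨i, ha⟩ _ hab => ?_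
  refine or_iff_not_imp_left.2 fun ha𝔪 => ?_
  have hJ : 𝔪 ⊔ Ideal.span {a} = ⊤ := by
    by_contra hJ
    refine ha𝔪 (hmax _ ?_ le_sup_left hJ ▸ Ideal.mem_sup_right (Ideal.subset_span rfl))
    exact h𝔪_hom.sup (Ideal.homogeneous_span 𝒜 _ fun x hx => hx ▸ ⟨i, ha⟩)
  obtain ⟨m, hm, _, hra, hmra⟩ := Submodule.mem_sup.1 (hJ ▸ Submodule.mem_top (x := (1 : R)))
  obtain ⟨r, rfl⟩ := Ideal.mem_span_singleton'.1 hra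
  have hb : b = m * b + r * (a * b) := by rw [← mul_assoc, ← add_mul, hmra, one_mul]
  exact hb ▸ 𝔪.add_mem (𝔪.mul_mem_right b hm) (𝔪.mul_mem_left r hab)

end Prime

theorem graded_module_local_global_principle_general {R : Type*} [Ring R]
    (𝒜 : ℤ → AddSubgroup R) [GradedRing 𝒜] (hcomm : IsGradedComm 𝒜)
    {M : Type*} [AddCommGroup M] [Module R M] :
    List.TFAE
      [∀ x : M, x = 0,
       ∀ 𝔭 : Ideal R, 𝔭 ≠ ⊤ → Ideal.IsHomogeneous 𝒜 𝔭 →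
          (∀ a b : R, a * b ∈ 𝔭 → a ∈ 𝔭 ∨ b ∈ 𝔭) →
          ∀ x : M, ∃ s : R, SetLike.IsHomogeneousElem 𝒜 s ∧ s ∉ 𝔭 ∧ s • x = 0,
       ∀ 𝔪 : Ideal R, 𝔪 ≠ ⊤ → Ideal.IsHomogeneous 𝒜 𝔪 →
          (∀ J : Ideal R, Ideal.IsHomogeneous 𝒜 J → 𝔪 ≤ J → J ≠ ⊤ → J = 𝔪) →
          ∀ x : M, ∃ s : R, SetLike.IsHomogeneousElem 𝒜 s ∧ s ∉ 𝔪 ∧ s • x = 0] := by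
  tfae_have 1 → 2 := fun h 𝔭 h𝔭_ne_top _ _ x =>
    ⟨1, isHomogeneousElem_one 𝒜, (Ideal.ne_top_iff_one 𝔭).1 h𝔭_ne_top, by rw [h x, smul_zero]⟩
  tfae_have 2 → 3 := fun h 𝔪 h𝔪_ne_top h𝔪_hom hmax => by
    have := hcomm.isTwoSided h𝔪_hom
    have h𝔪_prime : 𝔪.IsPrime := Ideal.IsGradedMaximal.isPrime ⟨h𝔪_hom, h𝔪_ne_top, hmax⟩
    exact h 𝔪 h𝔪_ne_top h𝔪_hom fun _ _ => h𝔪_prime.mem_or_mem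
  tfae_have 3 → 1 := fun h x => by
    by_contra hx
    obtain ⟨𝔪, ⟨h𝔪_hom, h𝔪_ne_top, hmax⟩, hann⟩ :=
      exists_isGradedMaximal_forall_smul_eq_zero 𝒜 hx
    obtain ⟨s, hs, hs𝔪, hsx⟩ := h 𝔪 h𝔪_ne_top h𝔪_hom hmax x
    exact hs𝔪 (hann s hs hsx)
  tfae_finish

/-- **Local-global principle for graded modules.**  Let `R` be a ℤ-graded, graded-commutative
ring and `M` a graded left `R`-module (graded by `ℳ : ℤ → AddSubgroup M` compatible with the
grading of `R`).  The following are equivalent: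
(1) `M = 0`;
(2) for every graded prime ideal `𝔭` the localization of `M` at the homogeneous elements
    outside `𝔭` vanishes, i.e. every `x ∈ M` is annihilated by some homogeneous `s ∉ 𝔭`;
(3) the same condition for every graded maximal ideal `𝔪`. -/
theorem graded_module_local_global_principle {R : Type*} [Ring R]
    (𝒜 : ℤ → AddSubgroup R) [GradedRing 𝒜] (hcomm : IsGradedComm 𝒜)
    {M : Type*} [AddCommGroup M] [Module R M] (ℳ : ℤ → AddSubgroup M)
    [DirectSum.Decomposition ℳ] [SetLike.GradedSMul 𝒜 ℳ] :
    List.TFAE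
      [∀ x : M, x = 0,
       ∀ 𝔭 : Ideal R, 𝔭 ≠ ⊤ → Ideal.IsHomogeneous 𝒜 𝔭 →
          (∀ a b : R, a * b ∈ 𝔭 → a ∈ 𝔭 ∨ b ∈ 𝔭) →
          ∀ x : M, ∃ s : R, SetLike.IsHomogeneousElem 𝒜 s ∧ s ∉ 𝔭 ∧ s • x = 0,
       ∀ 𝔪 : Ideal R, 𝔪 ≠ ⊤ → Ideal.IsHomogeneous 𝒜 𝔪 →
          (∀ J : Ideal R, Ideal.IsHomogeneous 𝒜 J → 𝔪 ≤ J → J ≠ ⊤ → J = 𝔪) →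
          ∀ x : M, ∃ s : R, SetLike.IsHomogeneousElem 𝒜 s ∧ s ∉ 𝔪 ∧ s • x = 0] :=
  graded_module_local_global_principle_general 𝒜 hcomm
end

section
/- Let R be a ℤ-graded, graded-commutative ring and let S be a submonoid of R all of whose elements are homogeneous. Then S satisfies the right Ore conditions: (O1) for every s ∈ S and r ∈ R there exist s' ∈ S and r' ∈ R with s*r' = r*s'; and (O2) for every r ∈ R and s ∈ S with s*r = 0 there exists s' ∈ S with r*s' = 0. Symmetrically, S also satisfies the left Ore conditions. In particular, the right ring of fractions R[S⁻¹] (the Ore localization of R at S) exists. -/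
theorem IsGradedComm.commute_mul_self {R : Type*} [Ring R] {𝒜 : ℤ → AddSubgroup R}
    [GradedRing 𝒜] (hcomm : IsGradedComm 𝒜) {s : R} (hs : SetLike.IsHomogeneousElem 𝒜 s)
    (r : R) : Commute (s * s) r := by
  obtain ⟨i, hi⟩ := hs
  induction r using DirectSum.Decomposition.inductionOn 𝒜 with
  | zero => exact Commute.zero_right _
  | @homogeneous j m =>
    exact (hcomm (SetLike.mul_mem_graded hi hi) m.2).1 ⟨i * j, by ring⟩
  | add a b ha hb => exact ha.add_right hb

namespace Submonoid

variable {M : Type*} [Monoid M] {S : Submonoid M}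

theorem exists_right_ore_of_commute_mul_self (hS : ∀ s ∈ S, ∀ r, Commute (s * s) r)
    {s : M} (hs : s ∈ S) (r : M) : ∃ s' ∈ S, ∃ r', s * r' = r * s' :=
  ⟨s * s, mul_mem hs hs, s * r, by rw [← mul_assoc, hS s hs r]⟩

theorem exists_left_ore_of_commute_mul_self (hS : ∀ s ∈ S, ∀ r, Commute (s * s) r)
    {s : M} (hs : s ∈ S) (r : M) : ∃ s' ∈ S, ∃ r', r' * s = s' * r :=
  ⟨s * s, mul_mem hs hs, r * s, by rw [mul_assoc, hS s hs r]⟩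

theorem exists_right_ore_cancel_of_commute_mul_self
    (hS : ∀ s ∈ S, ∀ r, Commute (s * s) r) {s r₁ r₂ : M} (hs : s ∈ S) (h : s * r₁ = s * r₂) :
    ∃ s' ∈ S, r₁ * s' = r₂ * s' :=
  ⟨s * s, mul_mem hs hs, by
    rw [← (hS s hs r₁).eq, ← (hS s hs r₂).eq, mul_assoc, mul_assoc, h]⟩

theorem exists_left_ore_cancel_of_commute_mul_self
    (hS : ∀ s ∈ S, ∀ r, Commute (s * s) r) {s r₁ r₂ : M} (hs : s ∈ S) (h : r₁ * s = r₂ * s) :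
    ∃ s' ∈ S, s' * r₁ = s' * r₂ :=
  ⟨s * s, mul_mem hs hs, by
    rw [(hS s hs r₁).eq, (hS s hs r₂).eq, ← mul_assoc, ← mul_assoc, h]⟩

theorem nonempty_oreSet_of_commute_mul_self (hS : ∀ s ∈ S, ∀ r, Commute (s * s) r) :
    Nonempty (OreLocalization.OreSet S) := by
  refine OreLocalization.nonempty_oreSet_iff.2 ⟨fun r₁ r₂ s h => ?_, fun r s => ?_⟩
  · obtain ⟨s', hs', h'⟩ := exists_left_ore_cancel_of_commute_mul_self hS s.2 h
    exact ⟨⟨s', hs'⟩, h'⟩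
  · obtain ⟨s', hs', r', h'⟩ := exists_left_ore_of_commute_mul_self hS s.2 r
    exact ⟨r', ⟨s', hs'⟩, h'.symm⟩

end Submonoid

/-- Let `R` be a ℤ-graded, graded-commutative ring and `S` a submonoid of `R` consisting of
homogeneous elements.  Then `S` satisfies the right Ore conditions (O1) and (O2), and
symmetrically the left Ore conditions; in particular the Ore localization (ring of
fractions) of `R` at `S` exists. -/
theorem homogeneous_submonoid_is_ore {R : Type*} [Ring R]
    (𝒜 : ℤ → AddSubgroup R) [GradedRing 𝒜] (hcomm : IsGradedComm 𝒜)
    (S : Submonoid R) (hS : ∀ s ∈ S, SetLike.IsHomogeneousElem 𝒜 s) :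
    -- right Ore condition (O1)
    (∀ s ∈ S, ∀ r : R, ∃ s' ∈ S, ∃ r' : R, s * r' = r * s') ∧
    -- right Ore condition (O2)
    (∀ r : R, ∀ s ∈ S, s * r = 0 → ∃ s' ∈ S, r * s' = 0) ∧
    -- left Ore condition (O1)
    (∀ s ∈ S, ∀ r : R, ∃ s' ∈ S, ∃ r' : R, r' * s = s' * r) ∧
    -- left Ore condition (O2)
    (∀ r : R, ∀ s ∈ S, r * s = 0 → ∃ s' ∈ S, s' * r = 0) ∧
    -- the Ore localization of `R` at `S` exists
    Nonempty (OreLocalization.OreSet S) := by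
  have hS' : ∀ s ∈ S, ∀ r, Commute (s * s) r := fun s hs => hcomm.commute_mul_self (hS s hs)
  refine ⟨fun s hs r => Submonoid.exists_right_ore_of_commute_mul_self hS' hs r,
    fun r s hs h => ?_,
    fun s hs r => Submonoid.exists_left_ore_of_commute_mul_self hS' hs r,
    fun r s hs h => ?_,
    Submonoid.nonempty_oreSet_of_commute_mul_self hS'⟩
  · simpa using Submonoid.exists_right_ore_cancel_of_commute_mul_self hS' hs
      (h.trans (mul_zero s).symm)
  · simpa using Submonoid.exists_left_ore_cancel_of_commute_mul_self hS' hs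
      (h.trans (zero_mul s).symm)
end

section
/- Let R be a ℤ-graded, graded-commutative ring, let S be a submonoid of R consisting of homogeneous elements, and let S_ev := {s ∈ S | s is homogeneous of even degree}, which is a submonoid of R. Then the canonical ring homomorphism from the Ore localization R[S_ev⁻¹] to the Ore localization R[S⁻¹] — that is, the unique ring homomorphism commuting with the canonical maps from R — is bijective; hence R[S⁻¹] ≅ R[S_ev⁻¹] as rings. -/
/-- The submonoid `S_ev` of all elements of `S` that are homogeneous of even degree. -/
def evenPart {R : Type*} [Ring R] (𝒜 : ℤ → AddSubgroup R) [GradedRing 𝒜]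
    (S : Submonoid R) : Submonoid R where
  carrier := {s : R | s ∈ S ∧ ∃ i : ℤ, Even i ∧ s ∈ 𝒜 i}
  one_mem' := ⟨S.one_mem, 0, Even.zero, SetLike.one_mem_graded 𝒜⟩
  mul_mem' := by
    rintro a b ⟨haS, i, hi, hai⟩ ⟨hbS, j, hj, hbj⟩
    exact ⟨S.mul_mem haS hbS, i + j, hi.add hj, SetLike.mul_mem_graded hai hbj⟩
/-!
Every `s ∈ S` is homogeneous, say of degree `i`, so `s * s` has degree `2 * i` and lies in
`S_ev`. An element whose square is a unit is a unit (with left inverse `(s * s)⁻¹ * s` and right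
inverse `s * (s * s)⁻¹`), so all of `S` becomes invertible in `R[S_ev⁻¹]`. Hence `R[S_ev⁻¹]` and
`R[S⁻¹]` satisfy each other's universal property, and the universal maps are mutually inverse.
-/

namespace OreLocalization

section Semiring

variable {R : Type*} [Semiring R] {S : Submonoid R} [OreSet S] {A : Type*} [Semiring A]

noncomputable def universalHomOfIsUnit (f : R →+* A) (hf : ∀ s : S, IsUnit (f s)) :
    R[S⁻¹] →+* A :=
  universalHom f (IsUnit.liftRight (f.toMonoidHom.comp S.subtype) hf) fun _ => rfl

theorem universalHomOfIsUnit_comp_numeratorRingHom (f : R →+* A) (hf : ∀ s : S, IsUnit (f s)) :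
    (universalHomOfIsUnit f hf).comp numeratorRingHom = f :=
  RingHom.ext fun _ => universalHom_commutes f _ fun _ => rfl

theorem ringHom_ext {φ ψ : R[S⁻¹] →+* A}
    (h : φ.comp numeratorRingHom = ψ.comp numeratorRingHom) : φ = ψ := by
  have hunit (s : S) : IsUnit (φ.comp numeratorRingHom (s : R)) := (numerator_isUnit s).map φ
  have key (χ : R[S⁻¹] →+* A) (hχ : χ.comp numeratorRingHom = φ.comp numeratorRingHom) :
      χ = universalHomOfIsUnit _ hunit :=
    universalHom_unique _ _ _ χ (RingHom.congr_fun hχ)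
  rw [key φ rfl, key ψ h.symm]

end Semiring

section Equiv

variable {R : Type*} [Semiring R] {S T : Submonoid R} [OreSet S] [OreSet T]
  (hS : ∀ s : S, IsUnit (numeratorRingHom (s : R) : R[T⁻¹]))
  (hT : ∀ t : T, IsUnit (numeratorRingHom (t : R) : R[S⁻¹]))

noncomputable def ringEquivOfIsUnit : R[S⁻¹] ≃+* R[T⁻¹] := by
  refine RingEquiv.ofRingHom (universalHomOfIsUnit numeratorRingHom hS)
    (universalHomOfIsUnit numeratorRingHom hT) (ringHom_ext ?_) (ringHom_ext ?_) <;>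
  rw [RingHom.comp_assoc, universalHomOfIsUnit_comp_numeratorRingHom,
    universalHomOfIsUnit_comp_numeratorRingHom, RingHom.id_comp]

theorem ringEquivOfIsUnit_comp_numeratorRingHom :
    (ringEquivOfIsUnit hS hT : R[S⁻¹] →+* R[T⁻¹]).comp numeratorRingHom = numeratorRingHom :=
  universalHomOfIsUnit_comp_numeratorRingHom _ hS

end Equiv

end OreLocalization

section Graded

variable {R : Type*} [Ring R] (𝒜 : ℤ → AddSubgroup R) [GradedRing 𝒜] (S : Submonoid R)

theorem evenPart_le : evenPart 𝒜 S ≤ S := fun _ hs => hs.1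

variable {𝒜 S}

theorem mul_self_mem_evenPart (hS : ∀ s ∈ S, SetLike.IsHomogeneousElem 𝒜 s) {s : R}
    (hs : s ∈ S) : s * s ∈ evenPart 𝒜 S :=
  let ⟨i, hi⟩ := hS s hs
  ⟨S.mul_mem hs hs, i + i, ⟨i, rfl⟩, SetLike.mul_mem_graded hi hi⟩

open OreLocalization in
theorem isUnit_numeratorRingHom_evenPart [OreSet (evenPart 𝒜 S)]
    (hS : ∀ s ∈ S, SetLike.IsHomogeneousElem 𝒜 s) (s : S) :
    IsUnit (numeratorRingHom (s : R) : OreLocalization (evenPart 𝒜 S) R) := by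
  rw [← isUnit_mul_self_iff, ← map_mul]
  exact numerator_isUnit ⟨_, mul_self_mem_evenPart hS s.2⟩

end Graded

open OreLocalization in
theorem oreLocalization_evenPart_bijective_general {R : Type*} [Ring R]
    (𝒜 : ℤ → AddSubgroup R) [GradedRing 𝒜]
    (S : Submonoid R) (hS : ∀ s ∈ S, SetLike.IsHomogeneousElem 𝒜 s)
    [OreLocalization.OreSet S] [OreLocalization.OreSet (evenPart 𝒜 S)] :
    ∃ φ : OreLocalization (evenPart 𝒜 S) R →+* OreLocalization S R,
      φ.comp OreLocalization.numeratorRingHom = OreLocalization.numeratorRingHom ∧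
      Function.Bijective φ ∧
      ∀ ψ : OreLocalization (evenPart 𝒜 S) R →+* OreLocalization S R,
        ψ.comp OreLocalization.numeratorRingHom = OreLocalization.numeratorRingHom → ψ = φ := by
  have hcomp := ringEquivOfIsUnit_comp_numeratorRingHom
    (fun s => numerator_isUnit ⟨(s : R), evenPart_le 𝒜 S s.2⟩)
    (isUnit_numeratorRingHom_evenPart hS)
  exact ⟨_, hcomp, RingEquiv.bijective _, fun ψ hψ => ringHom_ext (hψ.trans hcomp.symm)⟩

/-- Let `R` be a ℤ-graded, graded-commutative ring, `S` a submonoid of homogeneous elements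
and `S_ev ⊆ S` the submonoid of even-degree elements.  The canonical ring homomorphism
`R[S_ev⁻¹] → R[S⁻¹]` (the unique ring homomorphism commuting with the canonical maps
from `R`) is bijective. -/
theorem oreLocalization_evenPart_bijective {R : Type*} [Ring R]
    (𝒜 : ℤ → AddSubgroup R) [GradedRing 𝒜] (hcomm : IsGradedComm 𝒜)
    (S : Submonoid R) (hS : ∀ s ∈ S, SetLike.IsHomogeneousElem 𝒜 s)
    [OreLocalization.OreSet S] [OreLocalization.OreSet (evenPart 𝒜 S)] :
    ∃ φ : OreLocalization (evenPart 𝒜 S) R →+* OreLocalization S R,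
      φ.comp OreLocalization.numeratorRingHom = OreLocalization.numeratorRingHom ∧
      Function.Bijective φ ∧
      ∀ ψ : OreLocalization (evenPart 𝒜 S) R →+* OreLocalization S R,
        ψ.comp OreLocalization.numeratorRingHom = OreLocalization.numeratorRingHom → ψ = φ :=
  oreLocalization_evenPart_bijective_general 𝒜 S hS
end

section
/- Let R be a ℤ-graded, graded-commutative ring, S a submonoid of R consisting of homogeneous elements, and S_ev the submonoid of those elements of S that are homogeneous of even degree. In the Ore localization R[S_ev⁻¹], two fractions are equal, r/s = r'/s' (with r, r' ∈ R and s, s' ∈ S_ev), if and only if there exists t ∈ S_ev such that r*s'*t = r'*s*t. -/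
/-!
Graded commutativity says a homogeneous element of even degree commutes with every homogeneous
element, hence (summing homogeneous components) with everything: `S_ev` is a central submonoid.
For central denominators the Ore relation collapses to the commutative cross-multiplication
criterion, with `t = u` from a witness `(u, v)` of the Ore relation, and conversely
`(u, v) = (s t, s' t)`.
-/

open scoped OreLocalization

namespace OreLocalization

variable {R : Type*} [Monoid R] {S : Submonoid R} [OreSet S]

theorem oreDiv_eq_oreDiv_iff_of_le_center (hS : S ≤ Submonoid.center R) {r r' : R}
    {s s' : S} : r /ₒ s = r' /ₒ s' ↔ ∃ t ∈ S, r * s' * t = r' * s * t := by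
  have central (s : S) (x : R) : Commute (s : R) x :=
    (Submonoid.mem_center_iff.1 (hS s.2) x).symm
  rw [oreDiv_eq_iff]
  constructor
  · rintro ⟨u, v, hr, hs⟩
    rw [Submonoid.smul_def, smul_eq_mul, smul_eq_mul] at hr
    refine ⟨u, u.2, ?_⟩
    calc r * s' * u = u * s' * r := by
          rw [mul_assoc, (central s' u).eq, ((central u r).mul_left (central s' r)).eq]
      _ = v * r * s := by rw [hs, mul_assoc, (central s r).eq, mul_assoc]
      _ = r' * s * u := by
          rw [← hr, (central u r').eq, mul_assoc, mul_assoc, (central u s).eq]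
  · rintro ⟨t, ht, h⟩
    have ct : ∀ x, Commute t x := central ⟨t, ht⟩
    refine ⟨⟨s * t, S.mul_mem s.2 ht⟩, s' * t, ?_, ?_⟩
    · calc (s * t : R) * r' = r' * s * t := by
            rw [((central s r').mul_left (ct r')).eq, ← mul_assoc]
        _ = s' * t * r := by
            rw [← h, mul_assoc, ((central s' r).mul_left (ct r)).eq]
    · rw [((central s s').mul_left (ct s')).eq, mul_assoc, (ct s).eq]

end OreLocalization

theorem IsGradedComm.mem_center_of_mem_even {R : Type*} [Ring R] {𝒜 : ℤ → AddSubgroup R}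
    [DirectSum.Decomposition 𝒜] (hcomm : IsGradedComm 𝒜) {i : ℤ} (hi : Even i) {s : R}
    (hs : s ∈ 𝒜 i) : s ∈ Submonoid.center R := by
  refine Submonoid.mem_center_iff.2 fun x => ?_
  induction x using DirectSum.Decomposition.inductionOn 𝒜 with
  | zero => simp
  | homogeneous x => exact ((hcomm hs x.2).1 (hi.mul_right _)).symm
  | add a b ha hb => rw [mul_add, add_mul, ha, hb]

theorem IsGradedComm.evenPart_le_center {R : Type*} [Ring R] {𝒜 : ℤ → AddSubgroup R}
    [GradedRing 𝒜] (hcomm : IsGradedComm 𝒜) (S : Submonoid R) :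
    evenPart 𝒜 S ≤ Submonoid.center R :=
  fun _ ⟨_, _, hi, hs⟩ => hcomm.mem_center_of_mem_even hi hs

theorem oreDiv_eq_oreDiv_iff_evenPart_general {R : Type*} [Ring R]
    (𝒜 : ℤ → AddSubgroup R) [GradedRing 𝒜] (hcomm : IsGradedComm 𝒜)
    (S : Submonoid R) [OreLocalization.OreSet (evenPart 𝒜 S)] :
    ∀ (r r' : R) (s s' : evenPart 𝒜 S),
      (r /ₒ s = r' /ₒ s') ↔ ∃ t ∈ evenPart 𝒜 S, r * (s' : R) * t = r' * (s : R) * t :=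
  fun _ _ _ _ => OreLocalization.oreDiv_eq_oreDiv_iff_of_le_center (hcomm.evenPart_le_center S)

/-- Let `R` be a ℤ-graded, graded-commutative ring, `S` a submonoid of homogeneous elements
and `S_ev ⊆ S` the submonoid of even-degree elements.  In the Ore localization `R[S_ev⁻¹]`
two fractions are equal, `r /ₒ s = r' /ₒ s'`, if and only if there exists `t ∈ S_ev` with
`r * s' * t = r' * s * t`. -/
theorem oreDiv_eq_oreDiv_iff_evenPart {R : Type*} [Ring R]
    (𝒜 : ℤ → AddSubgroup R) [GradedRing 𝒜] (hcomm : IsGradedComm 𝒜)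
    (S : Submonoid R) (hS : ∀ s ∈ S, SetLike.IsHomogeneousElem 𝒜 s)
    [OreLocalization.OreSet (evenPart 𝒜 S)] :
    ∀ (r r' : R) (s s' : evenPart 𝒜 S),
      (r /ₒ s = r' /ₒ s') ↔ ∃ t ∈ evenPart 𝒜 S, r * (s' : R) * t = r' * (s : R) * t :=
  oreDiv_eq_oreDiv_iff_evenPart_general 𝒜 hcomm S
end

section
/- In a ℤ-graded, graded-commutative ring every graded maximal ideal is a prime ideal: if 𝔪 is a proper homogeneous ideal that is maximal with respect to inclusion among proper homogeneous ideals, then for all a, b ∈ R, a*b ∈ 𝔪 implies a ∈ 𝔪 or b ∈ 𝔪. -/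
open GradedRing DirectSum SetLike Finset

section LinearOrderedGrading

variable {ι σ A : Type*} [Ring A] [AddCommMonoid ι] [LinearOrder ι]
  [SetLike σ A] [AddSubmonoidClass σ A] {𝒜 : ι → σ} [GradedRing 𝒜]

theorem GradedRing.exists_greatest_proj_notMem {I : Ideal A} {x : A} (hx : x ∉ I) :
    ∃ m, proj 𝒜 m x ∉ I ∧ ∀ i, m < i → proj 𝒜 i x ∈ I := by
  classical
  set S := {i ∈ (decompose 𝒜 x).support | proj 𝒜 i x ∉ I}
  have hS : S.Nonempty := by
    rw [filter_nonempty_iff]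
    contrapose! hx
    rw [← sum_support_decompose 𝒜 x]
    exact Ideal.sum_mem _ fun i hi => by simpa only [proj_apply] using hx i hi
  refine ⟨S.max' hS, (mem_filter.mp (S.max'_mem hS)).2, fun i hi => ?_⟩
  by_contra hiI
  have hiS : i ∈ S := mem_filter.mpr ⟨by simpa [proj_apply] using fun h => hiI (by simp [h]), hiI⟩
  exact (S.le_max' i hiS).not_gt hi

variable [IsOrderedCancelAddMonoid ι]

theorem GradedRing.proj_add_mul_sub_mul_proj_mem (I : Ideal A) [I.IsTwoSided] {x y : A} {m n : ι}
    (hm : decompose 𝒜 x m ≠ 0) (hn : decompose 𝒜 y n ≠ 0)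
    (hx : ∀ i, m < i → proj 𝒜 i x ∈ I) (hy : ∀ j, n < j → proj 𝒜 j y ∈ I) :
    proj 𝒜 (m + n) (x * y) - proj 𝒜 m x * proj 𝒜 n y ∈ I := by
  classical
  set S := {ij ∈ (decompose 𝒜 x).support ×ˢ (decompose 𝒜 y).support | ij.1 + ij.2 = m + n}
  have hmn : (m, n) ∈ S := by simp [S, hm, hn]
  have hsum : proj 𝒜 (m + n) (x * y) = ∑ ij ∈ S, proj 𝒜 ij.1 x * proj 𝒜 ij.2 y := by
    simp_rw [S, proj_apply, decompose_mul, coe_mul_apply 𝒜]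
  rw [hsum, ← add_sum_erase _ _ hmn, add_sub_cancel_left]
  refine Ideal.sum_mem _ fun ⟨i, j⟩ hij => ?_
  obtain ⟨hne, -, hdeg⟩ := by simpa [S] using hij
  rcases le_or_lt_of_add_le_add hdeg.ge with hi | hj
  · rcases hi.lt_or_eq with hi | rfl
    · exact Ideal.mul_mem_right _ I (hx i hi)
    · exact absurd (add_left_cancel hdeg) (hne rfl)
  · exact Ideal.mul_mem_left I _ (hy j hj)

/-- The noncommutative form of `Ideal.IsHomogeneous.isPrime_of_homogeneous_mem_or_mem`. -/
theorem Ideal.IsHomogeneous.mem_or_mem_of_homogeneous_mem_or_mem {I : Ideal A} [I.IsTwoSided]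
    (hI : I.IsHomogeneous 𝒜)
    (homogeneous_mem_or_mem : ∀ {x y : A}, IsHomogeneousElem 𝒜 x → IsHomogeneousElem 𝒜 y →
      x * y ∈ I → x ∈ I ∨ y ∈ I)
    {x y : A} (hxy : x * y ∈ I) : x ∈ I ∨ y ∈ I := by
  by_contra! ⟨hx, hy⟩
  obtain ⟨m, hxm, hx⟩ := exists_greatest_proj_notMem (𝒜 := 𝒜) hx
  obtain ⟨n, hyn, hy⟩ := exists_greatest_proj_notMem (𝒜 := 𝒜) hy
  have hm : decompose 𝒜 x m ≠ 0 := fun h => hxm (by simp [proj_apply, h])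
  have hn : decompose 𝒜 y n ≠ 0 := fun h => hyn (by simp [proj_apply, h])
  have hmul : proj 𝒜 m x * proj 𝒜 n y ∈ I :=
    (I.sub_mem_iff_right (hI (m + n) hxy)).mp (proj_add_mul_sub_mul_proj_mem I hm hn hx hy)
  rcases homogeneous_mem_or_mem ⟨m, coe_mem _⟩ ⟨n, coe_mem _⟩ hmul with h | h
  · exact hxm h
  · exact hyn h

end LinearOrderedGrading

theorem Ideal.mem_of_mul_mem_of_sup_span_eq_top {R : Type*} [Semiring R] {I : Ideal R}
    [I.IsTwoSided] {x y : R} (hx : I ⊔ span {x} = ⊤) (hxy : x * y ∈ I) : y ∈ I := by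
  obtain ⟨m, hm, _, ht, hmt⟩ := Submodule.mem_sup.mp (hx ▸ Submodule.mem_top : (1 : R) ∈ I ⊔ _)
  obtain ⟨a, rfl⟩ := mem_span_singleton'.mp ht
  have hy : y = m * y + a * (x * y) := by rw [← mul_assoc, ← add_mul, hmt, one_mul]
  exact hy ▸ I.add_mem (I.mul_mem_right y hm) (I.mul_mem_left a hxy)

namespace IsGradedComm

variable {R : Type*} [Ring R] {𝒜 : ℤ → AddSubgroup R}

theorem mul_mem_of_swap_mem (hcomm : IsGradedComm 𝒜) {I : Ideal R} {i j : ℤ} {r s : R}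
    (hr : r ∈ 𝒜 i) (hs : s ∈ 𝒜 j) (h : s * r ∈ I) : r * s ∈ I := by
  obtain ⟨heven, hodd⟩ := hcomm hr hs
  by_cases he : Even (i * j)
  · rwa [heven he]
  · rw [hodd he]
    exact I.neg_mem h

theorem isTwoSided_of_isHomogeneous [GradedRing 𝒜] (hcomm : IsGradedComm 𝒜) {I : Ideal R}
    (hI : I.IsHomogeneous 𝒜) : I.IsTwoSided where
  mul_mem_of_left {m} y hm := by
    classical
    rw [← sum_support_decompose 𝒜 m, ← sum_support_decompose 𝒜 y, sum_mul_sum]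
    exact Ideal.sum_mem _ fun i _ => Ideal.sum_mem _ fun j _ =>
      hcomm.mul_mem_of_swap_mem (coe_mem _) (coe_mem _) (I.mul_mem_left _ (hI i hm))

end IsGradedComm

theorem graded_maximal_is_prime_general {R : Type*} [Ring R] (𝒜 : ℤ → AddSubgroup R)
    [GradedRing 𝒜] (hcomm : IsGradedComm 𝒜)
    (𝔪 : Ideal R) (hhom : Ideal.IsHomogeneous 𝒜 𝔪)
    (hmax : ∀ J : Ideal R, Ideal.IsHomogeneous 𝒜 J → 𝔪 ≤ J → J ≠ ⊤ → J = 𝔪) :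
    ∀ a b : R, a * b ∈ 𝔪 → a ∈ 𝔪 ∨ b ∈ 𝔪 := by
  have := hcomm.isTwoSided_of_isHomogeneous hhom
  intro a b hab
  refine hhom.mem_or_mem_of_homogeneous_mem_or_mem (fun {x y} hx _ hxy => ?_) hab
  by_cases hxm : x ∈ 𝔪
  · exact Or.inl hxm
  refine Or.inr (Ideal.mem_of_mul_mem_of_sup_span_eq_top ?_ hxy)
  by_contra hne
  have hspan : (Ideal.span {x}).IsHomogeneous 𝒜 :=
    Ideal.homogeneous_span 𝒜 _ fun z hz => (Set.mem_singleton_iff.mp hz) ▸ hx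
  exact hxm (hmax _ (hhom.sup hspan) le_sup_left hne ▸ Ideal.mem_sup_right (Ideal.subset_span rfl))

/-- In a ℤ-graded, graded-commutative ring, every graded maximal ideal (a proper homogeneous
ideal which is maximal among proper homogeneous ideals) is prime. -/
theorem graded_maximal_is_prime {R : Type*} [Ring R] (𝒜 : ℤ → AddSubgroup R)
    [GradedRing 𝒜] (hcomm : IsGradedComm 𝒜)
    (𝔪 : Ideal R) (hne : 𝔪 ≠ ⊤) (hhom : Ideal.IsHomogeneous 𝒜 𝔪)
    (hmax : ∀ J : Ideal R, Ideal.IsHomogeneous 𝒜 J → 𝔪 ≤ J → J ≠ ⊤ → J = 𝔪) :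
    ∀ a b : R, a * b ∈ 𝔪 → a ∈ 𝔪 ∨ b ∈ 𝔪 :=
  graded_maximal_is_prime_general 𝒜 hcomm 𝔪 hhom hmax
end

section
/- Let R be a ℤ-graded, graded-commutative ring and let 𝔫 be the ideal of R generated by the homogeneous nilpotent elements. Then: (a) the quotient R/𝔫 is a commutative ring, i.e., a*b - b*a ∈ 𝔫 for all a, b ∈ R; and (b) 𝔫 is contained in every graded prime ideal of R. (Consequently, the graded prime spectrum of R coincides with that of the graded commutative ring R/𝔫.) -/
theorem Ideal.IsPrime.mem_of_isNilpotent {α : Type*} [Semiring α] {I : Ideal α} (hI : I.IsPrime)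
    {x : α} (hx : IsNilpotent x) : x ∈ I := by
  obtain ⟨n, hn⟩ := hx
  exact hI.mem_of_pow_mem n (hn ▸ I.zero_mem)

theorem isNilpotent_commutator_of_anticomm {R : Type*} [Ring R] {r s : R}
    (hrs : r * s = -(s * r)) (hrr : r * r = -(r * r)) : IsNilpotent (r * s - s * r) := by
  have hsr : s * r = -(r * s) := by rw [hrs, neg_neg]
  have h2rr : r * r + r * r = 0 := add_eq_zero_iff_eq_neg.mpr hrr
  have hdiff : r * s - s * r = 2 * (r * s) := by rw [hsr]; noncomm_ring
  refine ⟨2, ?_⟩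
  calc (r * s - s * r) ^ 2 = 4 * (r * (s * r) * s) := by rw [hdiff]; noncomm_ring
    _ = -(2 * (r * r + r * r) * (s * s)) := by rw [hsr]; noncomm_ring
    _ = 0 := by rw [h2rr]; noncomm_ring

theorem DirectSum.Decomposition.commutator_mem_of_homogeneous {ι R : Type*} [DecidableEq ι]
    [Ring R] (𝒜 : ι → AddSubgroup R) [DirectSum.Decomposition 𝒜] {S : AddSubgroup R}
    (h : ∀ ⦃i j : ι⦄ ⦃r s : R⦄, r ∈ 𝒜 i → s ∈ 𝒜 j → r * s - s * r ∈ S) (a b : R) :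
    a * b - b * a ∈ S := by
  induction a using DirectSum.Decomposition.inductionOn 𝒜 generalizing b with
  | zero => simp
  | homogeneous r =>
    induction b using DirectSum.Decomposition.inductionOn 𝒜 with
    | zero => simp
    | homogeneous s => exact h r.2 s.2
    | add m m' hm hm' =>
      rw [show (r : R) * (m + m') - (m + m') * r = (r * m - m * r) + (r * m' - m' * r) by
        noncomm_ring]
      exact add_mem hm hm'
  | add m m' hm hm' =>
    rw [show (m + m') * b - b * (m + m') = (m * b - b * m) + (m' * b - b * m') by noncomm_ring]
    exact add_mem (hm b) (hm' b)

section GradedComm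

variable {R : Type*} [Ring R] {𝒜 : ℤ → AddSubgroup R} {i j : ℤ} {r s : R}

theorem commutator_mem_graded [SetLike.GradedMul 𝒜] (hr : r ∈ 𝒜 i) (hs : s ∈ 𝒜 j) :
    r * s - s * r ∈ 𝒜 (i + j) :=
  sub_mem (SetLike.mul_mem_graded hr hs) (add_comm j i ▸ SetLike.mul_mem_graded hs hr)

theorem IsGradedComm.isNilpotent_commutator (hcomm : IsGradedComm 𝒜) (hr : r ∈ 𝒜 i)
    (hs : s ∈ 𝒜 j) : IsNilpotent (r * s - s * r) := by
  by_cases hij : Even (i * j)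
  · rw [(hcomm hr hs).1 hij, sub_self]
    exact IsNilpotent.zero
  · have hii : ¬Even (i * i) := by
      rw [Int.even_mul] at hij ⊢
      tauto
    exact isNilpotent_commutator_of_anticomm ((hcomm hr hs).2 hij) ((hcomm hr hr).2 hii)

end GradedComm

/-- Let `R` be a ℤ-graded, graded-commutative ring and let `𝔫` be the ideal generated by the
homogeneous nilpotent elements.  Then (a) the quotient `R/𝔫` is commutative, i.e.
`a * b - b * a ∈ 𝔫` for all `a b : R`, and (b) `𝔫` is contained in every graded prime ideal. -/
theorem nilradical_ideal_properties {R : Type*} [Ring R]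
    (𝒜 : ℤ → AddSubgroup R) [GradedRing 𝒜] (hcomm : IsGradedComm 𝒜) :
    (∀ a b : R, a * b - b * a ∈
        Ideal.span {x : R | SetLike.IsHomogeneousElem 𝒜 x ∧ IsNilpotent x}) ∧
    (∀ 𝔭 : Ideal R, 𝔭 ≠ ⊤ → Ideal.IsHomogeneous 𝒜 𝔭 →
        (∀ a b : R, a * b ∈ 𝔭 → a ∈ 𝔭 ∨ b ∈ 𝔭) →
        Ideal.span {x : R | SetLike.IsHomogeneousElem 𝒜 x ∧ IsNilpotent x} ≤ 𝔭) := by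
  constructor
  · refine DirectSum.Decomposition.commutator_mem_of_homogeneous 𝒜
      (S := (Ideal.span {x : R | SetLike.IsHomogeneousElem 𝒜 x ∧ IsNilpotent x}).toAddSubgroup)
      fun i j r s hr hs ↦ Ideal.subset_span ?_
    exact ⟨⟨i + j, commutator_mem_graded hr hs⟩, hcomm.isNilpotent_commutator hr hs⟩
  · intro 𝔭 hne _ hprime
    have h𝔭 : 𝔭.IsPrime := ⟨hne, hprime _ _⟩
    exact Ideal.span_le.2 fun x hx ↦ h𝔭.mem_of_isNilpotent hx.2
end

section
/- Let k be a commutative ring and let A, B, M be cochain complexes of k-modules indexed by ℤ. Let α : A → M be any chain map and β : B → M a chain map which is degreewise surjective and a quasi-isomorphism. Form the degreewise pullback complex X with Xⁿ = {(a,b) ∈ Aⁿ × Bⁿ | α(a) = β(b)}, differential d(a,b) = (d a, d b), and projections p₁ : X → A and p₂ : X → B. Then p₁ is a quasi-isomorphism and, for every n ∈ ℤ, applying n-th cohomology to the pullback square yields a pullback square of k-modules: the canonical map Hⁿ(X) → {(ā, b̄) ∈ Hⁿ(A) × Hⁿ(B) | Hⁿ(α)(ā) = Hⁿ(β)(b̄)}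 induced by (Hⁿ(p₁), Hⁿ(p₂)) is bijective. -/
/-!
Since `β` is degreewise surjective, so is `p₁`, and its kernel is identified by `p₂` with the
kernel of `β`, which is acyclic because `β` is a quasi-isomorphism; hence `p₁` is a
quasi-isomorphism. We run this argument as a diagram chase on elements, through elementwise
criteria for a map of complexes of modules to be injective or surjective in homology. Once
`Hⁿ(p₁)` is bijective and `Hⁿ(β)` injective, the square of cohomology modules is a pullback.
-/

open CategoryTheory HomologicalComplex

theorem Function.injective_pair_and_range_pair_eq_of_bijective {X A B M : Type*}
    {f₁ : X → A} {f₂ : X → B} {g₁ : A → M} {g₂ : B → M}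
    (hcomm : ∀ x, g₁ (f₁ x) = g₂ (f₂ x))
    (hf₁ : Function.Bijective f₁) (hg₂ : Function.Injective g₂) :
    Function.Injective (fun x => (f₁ x, f₂ x)) ∧
      Set.range (fun x => (f₁ x, f₂ x)) = {q : A × B | g₁ q.1 = g₂ q.2} := by
  refine ⟨fun x y hxy => hf₁.1 congr(Prod.fst $hxy), Set.Subset.antisymm ?_ ?_⟩
  · rintro _ ⟨x, rfl⟩
    exact hcomm x
  · rintro ⟨a, b⟩ hab
    obtain ⟨x, rfl⟩ := hf₁.2 a
    exact ⟨x, Prod.ext rfl (hg₂ ((hcomm x).symm.trans hab))⟩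

namespace HomologicalComplex

variable {R : Type*} [Ring R] {ι : Type*} {c : ComplexShape ι}

section Elementwise

variable {K L : HomologicalComplex (ModuleCat R) c}

lemma Hom.comm_apply (f : K ⟶ L) (i j : ι) (x : K.X i) :
    f.f j (K.d i j x) = L.d i j (f.f i x) :=
  congr($(f.comm i j).hom x).symm

lemma d_d_apply (K : HomologicalComplex (ModuleCat R) c) (i j k : ι) (x : K.X i) :
    K.d j k (K.d i j x) = 0 :=
  congr($(K.d_comp_d i j k).hom x)

lemma injective_homologyMap_iff (φ : K ⟶ L) (i j k : ι)
    (hi : c.prev j = i) (hk : c.next j = k) :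
    Function.Injective (homologyMap φ j) ↔
      ∀ x : K.X j, K.d j k x = 0 → ∀ y : L.X i, φ.f j x = L.d i j y →
        ∃ x' : K.X i, K.d i j x' = x := by
  rw [← ModuleCat.mono_iff_injective, mono_homologyMap_iff_up_to_refinements φ i j k hi hk]
  constructor
  · intro h x hx y hxy
    let P : Submodule R (K.X j × L.X i) :=
      LinearMap.ker ((K.d j k).hom ∘ₗ LinearMap.fst R _ _) ⊓
        LinearMap.ker ((φ.f j).hom ∘ₗ LinearMap.fst R _ _ -
          (L.d i j).hom ∘ₗ LinearMap.snd R _ _)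
    obtain ⟨A', π, hπ, x₁, hx₁⟩ := h (A := ModuleCat.of R P)
      (ModuleCat.ofHom (LinearMap.fst R _ _ ∘ₗ P.subtype))
      (by ext ⟨p, hp, -⟩; exact hp)
      (ModuleCat.ofHom (LinearMap.snd R _ _ ∘ₗ P.subtype))
      (by ext ⟨p, -, hp⟩; exact sub_eq_zero.mp hp)
    obtain ⟨a, ha⟩ :=
      (ModuleCat.epi_iff_surjective π).mp hπ ⟨(x, y), hx, sub_eq_zero.mpr hxy⟩
    exact ⟨x₁ a, by simpa [ha] using congr($(hx₁).hom a).symm⟩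
  · intro h A x₂ hx₂ y₁ hy₁
    let P : Submodule R (A × K.X i) :=
      LinearMap.ker (x₂.hom ∘ₗ LinearMap.fst R _ _ - (K.d i j).hom ∘ₗ LinearMap.snd R _ _)
    refine ⟨ModuleCat.of R P, ModuleCat.ofHom (LinearMap.fst R _ _ ∘ₗ P.subtype),
      (ModuleCat.epi_iff_surjective _).mpr fun a => ?_,
      ModuleCat.ofHom (LinearMap.snd R _ _ ∘ₗ P.subtype), ?_⟩
    · obtain ⟨x', hx'⟩ := h (x₂ a) congr($(hx₂).hom a) (y₁ a) congr($(hy₁).hom a)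
      exact ⟨⟨(a, x'), sub_eq_zero.mpr hx'.symm⟩, rfl⟩
    · ext ⟨p, hp⟩
      exact sub_eq_zero.mp hp

lemma surjective_homologyMap_iff (φ : K ⟶ L) (i j k : ι)
    (hi : c.prev j = i) (hk : c.next j = k) :
    Function.Surjective (homologyMap φ j) ↔
      ∀ y : L.X j, L.d j k y = 0 →
        ∃ x : K.X j, K.d j k x = 0 ∧ ∃ y' : L.X i, φ.f j x + L.d i j y' = y := by
  rw [← ModuleCat.epi_iff_surjective, epi_homologyMap_iff_up_to_refinements φ i j k hi hk]
  constructor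
  · intro h y hy
    let P : Submodule R (L.X j) := LinearMap.ker (L.d j k).hom
    obtain ⟨A', π, hπ, x₂, hx₂, y₁, hxy⟩ := h (A := ModuleCat.of R P)
      (ModuleCat.ofHom P.subtype) (by ext ⟨p, hp⟩; exact hp)
    obtain ⟨a, ha⟩ := (ModuleCat.epi_iff_surjective π).mp hπ ⟨y, hy⟩
    exact ⟨x₂ a, congr($(hx₂).hom a), y₁ a, by simpa [ha] using congr($(hxy).hom a).symm⟩
  · intro h A y₂ hy₂
    let P : Submodule R (A × K.X j × L.X i) :=
      LinearMap.ker ((K.d j k).hom ∘ₗ LinearMap.fst R _ _ ∘ₗ LinearMap.snd R _ _) ⊓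
        LinearMap.ker (y₂.hom ∘ₗ LinearMap.fst R _ _ -
          (φ.f j).hom ∘ₗ LinearMap.fst R _ _ ∘ₗ LinearMap.snd R _ _ -
          (L.d i j).hom ∘ₗ LinearMap.snd R _ _ ∘ₗ LinearMap.snd R _ _)
    refine ⟨ModuleCat.of R P, ModuleCat.ofHom (LinearMap.fst R _ _ ∘ₗ P.subtype),
      (ModuleCat.epi_iff_surjective _).mpr fun a => ?_,
      ModuleCat.ofHom (LinearMap.fst R _ _ ∘ₗ LinearMap.snd R _ _ ∘ₗ P.subtype), ?_,
      ModuleCat.ofHom (LinearMap.snd R _ _ ∘ₗ LinearMap.snd R _ _ ∘ₗ P.subtype), ?_⟩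
    · obtain ⟨x, hx, y', hxy⟩ := h (y₂ a) congr($(hy₂).hom a)
      refine ⟨⟨(a, x, y'), hx, ?_⟩, rfl⟩
      simp [← hxy]
    · ext ⟨p, hp, -⟩
      exact hp
    · ext ⟨p, -, hp⟩
      simpa [sub_sub, sub_eq_zero] using hp

end Elementwise

variable {X A B M : HomologicalComplex (ModuleCat R) c}

structure IsDegreewisePullback (p₁ : X ⟶ A) (p₂ : X ⟶ B) (α : A ⟶ M) (β : B ⟶ M) :
    Prop where
  w : p₁ ≫ α = p₂ ≫ β
  ext : ∀ j (x y : X.X j), p₁.f j x = p₁.f j y → p₂.f j x = p₂.f j y → x = y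
  exists_lift : ∀ j (a : A.X j) (b : B.X j), α.f j a = β.f j b →
    ∃ x, p₁.f j x = a ∧ p₂.f j x = b

namespace IsDegreewisePullback

variable {p₁ : X ⟶ A} {p₂ : X ⟶ B} {α : A ⟶ M} {β : B ⟶ M}
  (h : IsDegreewisePullback p₁ p₂ α β)
include h

lemma w_apply (j : ι) (x : X.X j) : α.f j (p₁.f j x) = β.f j (p₂.f j x) :=
  congr($(h.w).f j x)

lemma surjective_homologyMap_fst (hβ : ∀ j, Function.Surjective (β.f j)) (i j k : ι)
    (hi : c.prev j = i) (hk : c.next j = k)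
    (hβH : Function.Surjective (homologyMap β j)) :
    Function.Surjective (homologyMap p₁ j) := by
  rw [surjective_homologyMap_iff p₁ i j k hi hk]
  intro a ha
  obtain ⟨b, hb, m, hm⟩ := (surjective_homologyMap_iff β i j k hi hk).mp hβH (α.f j a)
    (by rw [← Hom.comm_apply, ha, map_zero])
  obtain ⟨b', rfl⟩ := hβ i m
  obtain ⟨x, rfl, hx⟩ := h.exists_lift j a (b + B.d i j b')
    (by rw [map_add, Hom.comm_apply, hm])
  refine ⟨x, h.ext k _ _ ?_ ?_, 0, by simp⟩
  · rw [Hom.comm_apply, ha, map_zero]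
  · rw [Hom.comm_apply, hx, map_add, hb, d_d_apply, add_zero, map_zero]

lemma injective_homologyMap_fst (hβ : ∀ j, Function.Surjective (β.f j)) (h' i j k : ι)
    (hh : c.prev i = h') (hi : c.prev j = i) (hj : c.next i = j) (hk : c.next j = k)
    (hβH : Function.Injective (homologyMap β j))
    (hβH' : Function.Surjective (homologyMap β i)) :
    Function.Injective (homologyMap p₁ j) := by
  rw [injective_homologyMap_iff p₁ i j k hi hk]
  intro x hx a ha
  obtain ⟨b, hb⟩ := (injective_homologyMap_iff β i j k hi hk).mp hβH (p₂.f j x)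
    (by rw [← Hom.comm_apply, hx, map_zero]) (α.f i a)
    (by rw [← h.w_apply, ha, Hom.comm_apply])
  -- `β b - α a` is a cycle, hence of the form `β b' + d (β e)` with `b'` a cycle: then
  -- `(a, b - b' - d e)` lies in the pullback and has the same differential as `(a, b)`
  obtain ⟨b', hb', m, hm⟩ := (surjective_homologyMap_iff β h' i j hh hj).mp hβH'
    (β.f i b - α.f i a)
    (by rw [map_sub, ← Hom.comm_apply, ← Hom.comm_apply, hb, ← ha, h.w_apply, sub_self])
  obtain ⟨e, rfl⟩ := hβ h' m
  obtain ⟨x', hx'₁, hx'₂⟩ := h.exists_lift i a (b - b' - B.d h' i e)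
    (by rw [map_sub, map_sub, Hom.comm_apply, sub_sub, hm, sub_sub_cancel])
  refine ⟨x', h.ext j _ _ ?_ ?_⟩
  · rw [Hom.comm_apply, hx'₁, ha]
  · rw [Hom.comm_apply, hx'₂, map_sub, map_sub, hb, hb', d_d_apply, sub_zero, sub_zero]

end IsDegreewisePullback

end HomologicalComplex

/-- Let `k` be a commutative ring, `A`, `B`, `M` cochain complexes of `k`-modules,
`α : A ⟶ M` any chain map and `β : B ⟶ M` a degreewise surjective quasi-isomorphism.
Let `X` be a degreewise pullback of `α` and `β`, i.e. a complex equipped with chain maps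
`p₁ : X ⟶ A`, `p₂ : X ⟶ B` with `p₁ ≫ α = p₂ ≫ β` such that in each degree `n` the induced
map `Xⁿ → {(a, b) ∈ Aⁿ × Bⁿ | α a = β b}` is bijective.  Then `p₁` is a quasi-isomorphism
and, for every `n`, the induced map `Hⁿ(X) → {(ā, b̄) ∈ Hⁿ(A) × Hⁿ(B) | Hⁿ(α) ā = Hⁿ(β) b̄}`
is bijective. -/
theorem homology_of_pullback_along_surjective_quasiIso {k : Type*} [CommRing k]
    (A B M : CochainComplex (ModuleCat k) ℤ) (α : A ⟶ M) (β : B ⟶ M)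
    (hβsurj : ∀ n : ℤ, Function.Surjective (β.f n)) [QuasiIso β]
    (X : CochainComplex (ModuleCat k) ℤ) (p₁ : X ⟶ A) (p₂ : X ⟶ B)
    (hsq : p₁ ≫ α = p₂ ≫ β)
    (hpb : ∀ n : ℤ,
      Function.Injective (fun x : X.X n => ((p₁.f n) x, (p₂.f n) x)) ∧
      Set.range (fun x : X.X n => ((p₁.f n) x, (p₂.f n) x)) =
        {q : A.X n × B.X n | (α.f n) q.1 = (β.f n) q.2}) :
    QuasiIso p₁ ∧
    ∀ n : ℤ,
      Function.Injective
        (fun x : X.homology n => ((homologyMap p₁ n) x, (homologyMap p₂ n) x)) ∧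
      Set.range (fun x : X.homology n => ((homologyMap p₁ n) x, (homologyMap p₂ n) x)) =
        {q : A.homology n × B.homology n |
          (homologyMap α n) q.1 = (homologyMap β n) q.2} := by
  have hX : IsDegreewisePullback p₁ p₂ α β :=
    { w := hsq
      ext := fun n x y h₁ h₂ => (hpb n).1 (Prod.ext h₁ h₂)
      exists_lift := fun n a b hab => by
        obtain ⟨x, hx⟩ := (hpb n).2.ge (show (a, b) ∈ {q : A.X n × B.X n | _} from hab)
        exact ⟨x, congr(Prod.fst $hx), congr(Prod.snd $hx)⟩ }
  have hβH (n : ℤ) : Function.Bijective (homologyMap β n) := by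
    rw [← ConcreteCategory.isIso_iff_bijective, ← quasiIsoAt_iff_isIso_homologyMap]
    infer_instance
  have hp₁H (n : ℤ) : Function.Bijective (homologyMap p₁ n) :=
    ⟨hX.injective_homologyMap_fst hβsurj (n - 1 - 1) (n - 1) n (n + 1)
        (by simp) (by simp) (by simp) (by simp) (hβH n).1 (hβH (n - 1)).2,
      hX.surjective_homologyMap_fst hβsurj (n - 1) n (n + 1) (by simp) (by simp) (hβH n).2⟩
  have hsqH (n : ℤ) (x : X.homology n) :
      homologyMap α n (homologyMap p₁ n x) = homologyMap β n (homologyMap p₂ n x) := by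
    simp only [← ConcreteCategory.comp_apply, ← homologyMap_comp, hsq]
  refine ⟨(quasiIso_iff p₁).mpr fun n => ?_, fun n =>
    Function.injective_pair_and_range_pair_eq_of_bijective (hsqH n) (hp₁H n) (hβH n).1⟩
  rw [quasiIsoAt_iff_isIso_homologyMap, ConcreteCategory.isIso_iff_bijective]
  exact hp₁H n
end
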